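/- arXiv:2303.11901 — 6 statements merged into one kernel-verified Lean document; each statement's English description precedes it below -/
import Mathlib

section
/- Let n, k be positive integers, let Ã, M_R ∈ ℝ^{n×n} be invertible, let b̃, x₀, x̄, δr₀, δx ∈ ℝⁿ, Z̄, Ẑ, V̄ ∈ ℝ^{n×k}, Δ ∈ ℝ^{n×n}, ȳ ∈ ℝᵏ, and let u, ε₁, ε₂, ε_R ≥ 0 and c ≥ 1 be real numbers. Assume: (i) b̃ − Ãx₀ + δr₀ = Ã(Z̄ + Ẑ)ȳ; (ii) x̄ = x₀ + Z̄ȳ + δx; (iii) ‖δr₀‖ ≤ ε₂‖b̃‖ + ε₁‖Ã‖‖x₀‖; (iv) ‖ÃẐ‖ ≤ ε₁‖Ã‖‖Z̄‖; (v) ‖δx‖ ≤ u(c‖Z̄‖‖ȳ‖ + ‖x₀‖); (vi) Z̄ = M_R⁻¹V̄ + ΔV̄ with ‖Δ‖ ≤ ε_R and ‖V̄‖ ≤ c; (vii) ‖ȳ‖ ≤ 1.3‖V̄ȳ‖; (viii) ρ := 1.3·c·‖M_R‖(u‖Z̄‖ + ε_R) < 1. Then the residual of the left-preconditioned system satisfies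 ‖b̃ − Ãx̄‖ ≤ (1.3(1+c)/(1−ρ)) · ( ε₂‖b̃‖ + (ε₁+u)‖Ã‖( ‖Z̄‖‖M_R(x̄ − x₀)‖ + (1 + u‖M_R‖‖Z̄‖)‖x₀‖ ) ). -/
/-!
The computed iterate differs from `x₀` by `Z̄ȳ + δx`, so the residual equals `ÃẐȳ - δr₀ - Ãδx`,
which is bounded by a constant plus a multiple of `‖ȳ‖`. To control `‖ȳ‖`, multiply the update
by `M_R`: since `Z̄ = M_R⁻¹V̄ + ΔV̄`, we get `V̄ȳ = M_R(x̄ - x₀) - M_R δx - M_R ΔV̄ȳ`, and with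
`‖ȳ‖ ≤ 1.3‖V̄ȳ‖` the terms in `‖ȳ‖` on the right are absorbed into the left as the factor `1 - ρ`.
-/

open scoped Matrix.Norms.L2Operator

namespace FGMRES

open Matrix

section Algebra

variable {l m n p o R : Type*} [Fintype m] [Fintype p]

theorem residual_eq [Ring R] {A : Matrix l m R} {b δr₀ : Matrix l o R}
    {x₀ xbar δx : Matrix m o R} {Z Zhat : Matrix m p R} {y : Matrix p o R}
    (h1 : b - A * x₀ + δr₀ = A * (Z + Zhat) * y) (h2 : xbar = x₀ + Z * y + δx) :
    b - A * xbar = A * Zhat * y - δr₀ - A * δx := by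
  have hb : b = A * (Z + Zhat) * y + A * x₀ - δr₀ := by rw [← h1]; abel
  rw [hb, h2, Matrix.mul_add, Matrix.add_mul, Matrix.mul_add, Matrix.mul_add,
    Matrix.mul_assoc A Z y]
  abel

theorem basis_mul_eq [Fintype n] [DecidableEq n] [CommRing R] {M Δ : Matrix n n R}
    {x₀ xbar δx : Matrix n o R} {Z V : Matrix n p R} {y : Matrix p o R}
    (hM : IsUnit M.det) (h2 : xbar = x₀ + Z * y + δx) (h6 : Z = M⁻¹ * V + Δ * V) :
    V * y = M * (xbar - x₀) - M * δx - M * (Δ * (V * y)) := by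
  have hx : xbar - x₀ = Z * y + δx := by rw [h2]; abel
  rw [hx, h6, Matrix.add_mul, Matrix.mul_add, Matrix.mul_add, Matrix.mul_assoc Δ,
    Matrix.mul_assoc, ← Matrix.mul_assoc M, mul_nonsing_inv M hM, Matrix.one_mul]
  abel

end Algebra

section Norms

variable {𝕜 l m n p o : Type*} [RCLike 𝕜] [Fintype l] [Fintype m] [DecidableEq m]
  [Fintype n] [DecidableEq n] [Fintype p] [DecidableEq p] [Fintype o] [DecidableEq o]

theorem norm_residual_le {A : Matrix l m 𝕜} {b δr₀ : Matrix l o 𝕜}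
    {x₀ xbar δx : Matrix m o 𝕜} {Z Zhat : Matrix m p 𝕜} {y : Matrix p o 𝕜} {u ε₁ ε₂ c : ℝ}
    (h1 : b - A * x₀ + δr₀ = A * (Z + Zhat) * y) (h2 : xbar = x₀ + Z * y + δx)
    (h3 : ‖δr₀‖ ≤ ε₂ * ‖b‖ + ε₁ * ‖A‖ * ‖x₀‖) (h4 : ‖A * Zhat‖ ≤ ε₁ * ‖A‖ * ‖Z‖)
    (h5 : ‖δx‖ ≤ u * (c * ‖Z‖ * ‖y‖ + ‖x₀‖)) (hε₁ : 0 ≤ ε₁) (hc : 1 ≤ c) :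
    ‖b - A * xbar‖ ≤ ε₂ * ‖b‖ + (ε₁ + u) * ‖A‖ * ‖x₀‖ + c * ((ε₁ + u) * ‖A‖ * ‖Z‖) * ‖y‖ := by
  have hZhat : ‖A * Zhat * y‖ ≤ c * (ε₁ * ‖A‖ * ‖Z‖) * ‖y‖ :=
    calc ‖A * Zhat * y‖ ≤ ‖A * Zhat‖ * ‖y‖ := l2_opNorm_mul _ _
      _ ≤ ε₁ * ‖A‖ * ‖Z‖ * ‖y‖ := by gcongr
      _ ≤ c * (ε₁ * ‖A‖ * ‖Z‖) * ‖y‖ := by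
          gcongr ?_ * _
          exact le_mul_of_one_le_left
            (mul_nonneg (mul_nonneg hε₁ (norm_nonneg A)) (norm_nonneg Z)) hc
  have hδx : ‖A * δx‖ ≤ ‖A‖ * (u * (c * ‖Z‖ * ‖y‖ + ‖x₀‖)) :=
    (l2_opNorm_mul _ _).trans (by gcongr)
  rw [residual_eq h1 h2]
  have := norm_sub_le_of_le (norm_sub_le (A * Zhat * y) δr₀) (le_refl ‖A * δx‖)
  linarith

theorem norm_basis_mul_le {M Δ : Matrix n n 𝕜} {x₀ xbar δx : Matrix n o 𝕜}
    {Z V : Matrix n p 𝕜} {y : Matrix p o 𝕜} {εR c : ℝ}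
    (hM : IsUnit M.det) (h2 : xbar = x₀ + Z * y + δx) (h6 : Z = M⁻¹ * V + Δ * V)
    (h6a : ‖Δ‖ ≤ εR) (h6b : ‖V‖ ≤ c) :
    ‖V * y‖ ≤ ‖M * (xbar - x₀)‖ + ‖M‖ * ‖δx‖ + ‖M‖ * (εR * (c * ‖y‖)) := by
  have hΔ : ‖Δ * (V * y)‖ ≤ εR * (c * ‖y‖) :=
    calc ‖Δ * (V * y)‖ ≤ ‖Δ‖ * (‖V‖ * ‖y‖) :=
          (l2_opNorm_mul _ _).trans (by gcongr; exact l2_opNorm_mul _ _)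
      _ ≤ εR * (c * ‖y‖) :=
          mul_le_mul h6a (by gcongr) (by positivity) ((norm_nonneg Δ).trans h6a)
  rw [basis_mul_eq hM h2 h6]
  refine (norm_sub_le_of_le (norm_sub_le _ _) le_rfl).trans ?_
  gcongr
  · exact l2_opNorm_mul _ _
  · exact (l2_opNorm_mul _ _).trans (by gcongr)

theorem norm_coeff_le {M Δ : Matrix n n 𝕜} {x₀ xbar δx : Matrix n o 𝕜}
    {Z V : Matrix n p 𝕜} {y : Matrix p o 𝕜} {u εR c γ : ℝ}
    (hM : IsUnit M.det) (h2 : xbar = x₀ + Z * y + δx)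
    (h5 : ‖δx‖ ≤ u * (c * ‖Z‖ * ‖y‖ + ‖x₀‖)) (h6 : Z = M⁻¹ * V + Δ * V)
    (h6a : ‖Δ‖ ≤ εR) (h6b : ‖V‖ ≤ c) (h7 : ‖y‖ ≤ γ * ‖V * y‖) (hγ : 0 ≤ γ) :
    (1 - γ * c * ‖M‖ * (u * ‖Z‖ + εR)) * ‖y‖ ≤ γ * (‖M * (xbar - x₀)‖ + u * ‖M‖ * ‖x₀‖) := by
  have hVy := norm_basis_mul_le hM h2 h6 h6a h6b
  have hMδx : ‖M‖ * ‖δx‖ ≤ ‖M‖ * (u * (c * ‖Z‖ * ‖y‖ + ‖x₀‖)) := by gcongr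
  have := mul_le_mul_of_nonneg_left (hVy.trans (add_le_add_three le_rfl hMδx le_rfl)) hγ
  linarith

end Norms

theorem le_of_le_add_mul_of_one_sub_mul_le {e P Q y R c γ ρ : ℝ} (hP : 0 ≤ P) (hQ : 0 ≤ Q)
    (hR : 0 ≤ R) (hc : 0 ≤ c) (hγ : 1 ≤ γ) (hρ₀ : 0 ≤ ρ) (hρ₁ : ρ < 1)
    (he : e ≤ P + c * Q * y) (hy : (1 - ρ) * y ≤ γ * R) :
    e ≤ γ * (1 + c) / (1 - ρ) * (P + Q * R) := by
  have hρ : 0 < 1 - ρ := sub_pos.2 hρ₁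
  have hK : 1 ≤ γ * (1 + c) / (1 - ρ) := by
    rw [le_div_iff₀ hρ]; nlinarith
  calc e ≤ P + c * Q * (γ * R / (1 - ρ)) := he.trans (by gcongr; exact (le_div_iff₀' hρ).2 hy)
    _ = P + γ * c / (1 - ρ) * (Q * R) := by ring
    _ ≤ γ * (1 + c) / (1 - ρ) * P + γ * (1 + c) / (1 - ρ) * (Q * R) := by
        refine add_le_add (le_mul_of_one_le_left hP hK) ?_
        have : γ * c ≤ γ * (1 + c) := by nlinarith
        exact mul_le_mul_of_nonneg_right (div_le_div_of_nonneg_right this hρ.le) (mul_nonneg hQ hR)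
    _ = γ * (1 + c) / (1 - ρ) * (P + Q * R) := by ring

end FGMRES

open FGMRES in
theorem fgmres_residual_bound_general
    (n k : ℕ)
    (Atil MR : Matrix (Fin n) (Fin n) ℝ)
    (hMR : IsUnit MR.det)
    (btil x₀ xbar δr₀ δx : Matrix (Fin n) (Fin 1) ℝ)
    (Zbar Zhat Vbar : Matrix (Fin n) (Fin k) ℝ)
    (Δ : Matrix (Fin n) (Fin n) ℝ)
    (ybar : Matrix (Fin k) (Fin 1) ℝ)
    (u ε₁ ε₂ εR c : ℝ)
    (hu : 0 ≤ u) (hε₁ : 0 ≤ ε₁) (hε₂ : 0 ≤ ε₂) (hc : 1 ≤ c)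
    (h1 : btil - Atil * x₀ + δr₀ = Atil * (Zbar + Zhat) * ybar)
    (h2 : xbar = x₀ + Zbar * ybar + δx)
    (h3 : ‖δr₀‖ ≤ ε₂ * ‖btil‖ + ε₁ * ‖Atil‖ * ‖x₀‖)
    (h4 : ‖Atil * Zhat‖ ≤ ε₁ * ‖Atil‖ * ‖Zbar‖)
    (h5 : ‖δx‖ ≤ u * (c * ‖Zbar‖ * ‖ybar‖ + ‖x₀‖))
    (h6 : Zbar = MR⁻¹ * Vbar + Δ * Vbar)
    (h6a : ‖Δ‖ ≤ εR) (h6b : ‖Vbar‖ ≤ c)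
    (h7 : ‖ybar‖ ≤ 1.3 * ‖Vbar * ybar‖)
    (ρ : ℝ) (hρdef : ρ = 1.3 * c * ‖MR‖ * (u * ‖Zbar‖ + εR))
    (hρ : ρ < 1) :
    ‖btil - Atil * xbar‖ ≤
      (1.3 * (1 + c) / (1 - ρ)) *
        (ε₂ * ‖btil‖ + (ε₁ + u) * ‖Atil‖ *
          (‖Zbar‖ * ‖MR * (xbar - x₀)‖ + (1 + u * ‖MR‖ * ‖Zbar‖) * ‖x₀‖)) := by
  have hεR : 0 ≤ εR := (norm_nonneg Δ).trans h6a
  have hρ₀ : 0 ≤ ρ := hρdef ▸ by positivity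
  have hres := norm_residual_le h1 h2 h3 h4 h5 hε₁ hc
  have hcoeff := norm_coeff_le hMR h2 h5 h6 h6a h6b h7 (by norm_num)
  rw [← hρdef] at hcoeff
  calc ‖btil - Atil * xbar‖
      ≤ 1.3 * (1 + c) / (1 - ρ) * ((ε₂ * ‖btil‖ + (ε₁ + u) * ‖Atil‖ * ‖x₀‖) +
          (ε₁ + u) * ‖Atil‖ * ‖Zbar‖ * (‖MR * (xbar - x₀)‖ + u * ‖MR‖ * ‖x₀‖)) :=
        le_of_le_add_mul_of_one_sub_mul_le (by positivity) (by positivity) (by positivity)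
          (by positivity) (by norm_num) hρ₀ hρ hres hcoeff
    _ = _ := by ring

/-- Deterministic form of Theorem 2.1: residual bound for mixed precision
split-preconditioned FGMRES. -/
theorem fgmres_residual_bound
    (n k : ℕ) (hn : 0 < n) (hk : 0 < k)
    (Atil MR : Matrix (Fin n) (Fin n) ℝ)
    (hAtil : IsUnit Atil.det) (hMR : IsUnit MR.det)
    (btil x₀ xbar δr₀ δx : Matrix (Fin n) (Fin 1) ℝ)
    (Zbar Zhat Vbar : Matrix (Fin n) (Fin k) ℝ)
    (Δ : Matrix (Fin n) (Fin n) ℝ)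
    (ybar : Matrix (Fin k) (Fin 1) ℝ)
    (u ε₁ ε₂ εR c : ℝ)
    (hu : 0 ≤ u) (hε₁ : 0 ≤ ε₁) (hε₂ : 0 ≤ ε₂) (hεR : 0 ≤ εR) (hc : 1 ≤ c)
    (h1 : btil - Atil * x₀ + δr₀ = Atil * (Zbar + Zhat) * ybar)
    (h2 : xbar = x₀ + Zbar * ybar + δx)
    (h3 : ‖δr₀‖ ≤ ε₂ * ‖btil‖ + ε₁ * ‖Atil‖ * ‖x₀‖)
    (h4 : ‖Atil * Zhat‖ ≤ ε₁ * ‖Atil‖ * ‖Zbar‖)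
    (h5 : ‖δx‖ ≤ u * (c * ‖Zbar‖ * ‖ybar‖ + ‖x₀‖))
    (h6 : Zbar = MR⁻¹ * Vbar + Δ * Vbar)
    (h6a : ‖Δ‖ ≤ εR) (h6b : ‖Vbar‖ ≤ c)
    (h7 : ‖ybar‖ ≤ 1.3 * ‖Vbar * ybar‖)
    (ρ : ℝ) (hρdef : ρ = 1.3 * c * ‖MR‖ * (u * ‖Zbar‖ + εR))
    (hρ : ρ < 1) :
    ‖btil - Atil * xbar‖ ≤
      (1.3 * (1 + c) / (1 - ρ)) *
        (ε₂ * ‖btil‖ + (ε₁ + u) * ‖Atil‖ *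
          (‖Zbar‖ * ‖MR * (xbar - x₀)‖ + (1 + u * ‖MR‖ * ‖Zbar‖) * ‖x₀‖)) :=
  fgmres_residual_bound_general n k Atil MR hMR btil x₀ xbar δr₀ δx Zbar Zhat Vbar Δ ybar u ε₁ ε₂ εR
    c hu hε₁ hε₂ hc h1 h2 h3 h4 h5 h6 h6a h6b h7 ρ hρdef hρ
end

section
/- Under the same hypotheses (i)–(viii) as in the deterministic Theorem 2.1 (with Ã, M_R ∈ ℝ^{n×n} invertible; b̃, x₀, x̄, δr₀, δx ∈ ℝⁿ; Z̄, Ẑ, V̄ ∈ ℝ^{n×k}; Δ ∈ ℝ^{n×n}; ȳ ∈ ℝᵏ; u, ε₁, ε₂, ε_R ≥ 0, c ≥ 1; ρ := 1.3c‖M_R‖(u‖Z̄‖ + ε_R) < 1), and assuming additionally that ‖b̃‖ + ‖Ã‖‖x̄‖ > 0, the normwise relative backward error of the left-preconditioned system satisfies ‖b̃ − Ãx̄‖ / (‖b̃‖ + ‖Ã‖‖x̄‖) ≤ (1.3(1+c)/(1−ρ)) · ζ, where ζ := ( ε₂‖b̃‖ + (ε₁+u)‖Ã‖( ‖Z̄‖‖M_R(x̄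 − x₀)‖ + (1 + u‖M_R‖‖Z̄‖)‖x₀‖ ) ) / (‖b̃‖ + ‖Ã‖‖x̄‖). -/
open scoped Matrix.Norms.L2Operator

/-!
Write `r = b̃ - Ãx̄` for the residual. Substituting (ii) into (i) leaves only rounding terms,
`r = ÃẐȳ - δr₀ - Ãδx`, so `‖r‖` is controlled by `c‖Z̄‖‖ȳ‖ + ‖x₀‖`. To bound `‖ȳ‖` by data of the
computed solution, multiply (vi) by `M_R` and apply it to `ȳ`:
`V̄ȳ = M_R(x̄ - x₀) - M_R δx - M_R Δ V̄ȳ`. Together with (vii) this gives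
`(1 - ρ)‖ȳ‖ ≤ 1.3 (‖M_R(x̄ - x₀)‖ + u‖M_R‖‖x₀‖)`, and `ρ < 1` lets us divide.
-/

theorem norm_sub_sub_le {E : Type*} [SeminormedAddGroup E] (a b c : E) :
    ‖a - b - c‖ ≤ ‖a‖ + ‖b‖ + ‖c‖ :=
  (norm_sub_le _ _).trans (add_le_add_left (norm_sub_le a b) _)

section Algebra

variable {R m p q : Type*} [Fintype m] [Fintype p]

theorem residual_eq_of_perturbed_update [Ring R] {A : Matrix m m R} {b x₀ x δr δx : Matrix m q R}
    {Z Zhat : Matrix m p R} {y : Matrix p q R}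
    (h1 : b - A * x₀ + δr = A * (Z + Zhat) * y) (h2 : x = x₀ + Z * y + δx) :
    b - A * x = A * Zhat * y - δr - A * δx := by
  have h1' : b - A * x₀ = A * (Z * y) + A * Zhat * y - δr := by
    rw [← Matrix.mul_assoc, ← Matrix.add_mul, ← Matrix.mul_add, ← h1]
    abel
  rw [h2, Matrix.mul_add, Matrix.mul_add, ← sub_sub, ← sub_sub, h1']
  abel

theorem mul_eq_of_eq_inv_mul_add_mul [DecidableEq m] [CommRing R] {M Δ : Matrix m m R}
    (hM : IsUnit M.det) {V Z : Matrix m p R} {x₀ x δx : Matrix m q R} {y : Matrix p q R}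
    (h2 : x = x₀ + Z * y + δx) (h6 : Z = M⁻¹ * V + Δ * V) :
    V * y = M * (x - x₀) - M * δx - M * Δ * (V * y) := by
  have hMZ : M * Z = V + M * Δ * V := by
    rw [h6, Matrix.mul_add, ← Matrix.mul_assoc, Matrix.mul_nonsing_inv M hM, Matrix.one_mul,
      Matrix.mul_assoc]
  have hxy : x - x₀ - δx = Z * y := by rw [h2]; abel
  rw [← Matrix.mul_sub, hxy, ← Matrix.mul_assoc, hMZ, Matrix.add_mul, Matrix.mul_assoc]
  abel

end Algebra

section Norms

variable {𝕜 m p q : Type*} [RCLike 𝕜] [Fintype m] [DecidableEq m] [Fintype p] [DecidableEq p]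
  [Fintype q] [DecidableEq q]

theorem norm_residual_le_of_perturbed_update {A : Matrix m m 𝕜} {b x₀ x δr δx : Matrix m q 𝕜}
    {Z Zhat : Matrix m p 𝕜} {y : Matrix p q 𝕜} {u ε₁ ε₂ c : ℝ} (hε₁ : 0 ≤ ε₁) (hc : 1 ≤ c)
    (h1 : b - A * x₀ + δr = A * (Z + Zhat) * y) (h2 : x = x₀ + Z * y + δx)
    (h3 : ‖δr‖ ≤ ε₂ * ‖b‖ + ε₁ * ‖A‖ * ‖x₀‖) (h4 : ‖A * Zhat‖ ≤ ε₁ * ‖A‖ * ‖Z‖)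
    (h5 : ‖δx‖ ≤ u * (c * ‖Z‖ * ‖y‖ + ‖x₀‖)) :
    ‖b - A * x‖ ≤ ε₂ * ‖b‖ + (ε₁ + u) * ‖A‖ * (c * ‖Z‖ * ‖y‖ + ‖x₀‖) := by
  have hZhat : ‖A * Zhat * y‖ ≤ ε₁ * ‖A‖ * (c * ‖Z‖ * ‖y‖) := by
    calc ‖A * Zhat * y‖ ≤ ‖A * Zhat‖ * ‖y‖ := Matrix.l2_opNorm_mul _ _
      _ ≤ ε₁ * ‖A‖ * ‖Z‖ * ‖y‖ := by gcongr
      _ ≤ ε₁ * ‖A‖ * (c * ‖Z‖ * ‖y‖) := by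
        rw [mul_assoc (ε₁ * ‖A‖), mul_assoc c]
        exact mul_le_mul_of_nonneg_left (le_mul_of_one_le_left (by positivity) hc)
          (mul_nonneg hε₁ (norm_nonneg _))
  have hδx : ‖A * δx‖ ≤ ‖A‖ * (u * (c * ‖Z‖ * ‖y‖ + ‖x₀‖)) :=
    (Matrix.l2_opNorm_mul _ _).trans (by gcongr)
  calc ‖b - A * x‖ = ‖A * Zhat * y - δr - A * δx‖ := by rw [residual_eq_of_perturbed_update h1 h2]
    _ ≤ ‖A * Zhat * y‖ + ‖δr‖ + ‖A * δx‖ := norm_sub_sub_le _ _ _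
    _ ≤ _ := by linear_combination hZhat + h3 + hδx

theorem one_sub_mul_norm_le_of_eq_inv_mul_add_mul {M Δ : Matrix m m 𝕜} (hM : IsUnit M.det)
    {V Z : Matrix m p 𝕜} {x₀ x δx : Matrix m q 𝕜} {y : Matrix p q 𝕜} {u εR c κ : ℝ}
    (hκ : 0 ≤ κ) (h2 : x = x₀ + Z * y + δx) (h5 : ‖δx‖ ≤ u * (c * ‖Z‖ * ‖y‖ + ‖x₀‖))
    (h6 : Z = M⁻¹ * V + Δ * V) (hΔ : ‖Δ‖ ≤ εR) (hV : ‖V‖ ≤ c) (h7 : ‖y‖ ≤ κ * ‖V * y‖) :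
    (1 - κ * c * ‖M‖ * (u * ‖Z‖ + εR)) * ‖y‖ ≤ κ * (‖M * (x - x₀)‖ + u * ‖M‖ * ‖x₀‖) := by
  have hεR : 0 ≤ εR := (norm_nonneg _).trans hΔ
  have hδx : ‖M * δx‖ ≤ ‖M‖ * (u * (c * ‖Z‖ * ‖y‖ + ‖x₀‖)) :=
    (Matrix.l2_opNorm_mul _ _).trans (by gcongr)
  have hΔV : ‖M * Δ * (V * y)‖ ≤ ‖M‖ * εR * (c * ‖y‖) := by
    calc ‖M * Δ * (V * y)‖ ≤ ‖M * Δ‖ * ‖V * y‖ := Matrix.l2_opNorm_mul _ _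
      _ ≤ ‖M‖ * ‖Δ‖ * (‖V‖ * ‖y‖) := by gcongr <;> exact Matrix.l2_opNorm_mul _ _
      _ ≤ ‖M‖ * εR * (c * ‖y‖) := by gcongr
  have hVy : ‖V * y‖ ≤ ‖M * (x - x₀)‖ + ‖M * δx‖ + ‖M * Δ * (V * y)‖ := by
    conv_lhs => rw [mul_eq_of_eq_inv_mul_add_mul hM h2 h6]
    exact norm_sub_sub_le _ _ _
  have hy : ‖y‖ ≤ κ * (‖M * (x - x₀)‖ + ‖M‖ * (u * (c * ‖Z‖ * ‖y‖ + ‖x₀‖))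
      + ‖M‖ * εR * (c * ‖y‖)) :=
    h7.trans (mul_le_mul_of_nonneg_left (by linear_combination hVy + hδx + hΔV) hκ)
  linear_combination hy

end Norms

theorem one_sub_mul_le_of_one_sub_mul_le {ρ c z y w u m x₀ : ℝ} (hρ : 0 ≤ ρ) (hc : 1 ≤ c)
    (hu : 0 ≤ u) (hz : 0 ≤ z) (hw : 0 ≤ w) (hm : 0 ≤ m) (hx₀ : 0 ≤ x₀)
    (hy : (1 - ρ) * y ≤ 1.3 * (w + u * m * x₀)) :
    (1 - ρ) * (c * z * y + x₀) ≤ 1.3 * (1 + c) * (z * w + (1 + u * m * z) * x₀) := by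
  have hcz : c * z * ((1 - ρ) * y) ≤ c * z * (1.3 * (w + u * m * x₀)) :=
    mul_le_mul_of_nonneg_left hy (mul_nonneg (by linarith) hz)
  nlinarith [mul_nonneg hz hw, mul_nonneg (mul_nonneg (mul_nonneg hu hm) hz) hx₀]

theorem fgmres_backward_error_bound_general
    (n k : ℕ)
    (Atil MR : Matrix (Fin n) (Fin n) ℝ)
    (hMR : IsUnit MR.det)
    (btil x₀ xbar δr₀ δx : Matrix (Fin n) (Fin 1) ℝ)
    (Zbar Zhat Vbar : Matrix (Fin n) (Fin k) ℝ)
    (Δ : Matrix (Fin n) (Fin n) ℝ)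
    (ybar : Matrix (Fin k) (Fin 1) ℝ)
    (u ε₁ ε₂ εR c : ℝ)
    (hu : 0 ≤ u) (hε₁ : 0 ≤ ε₁) (hε₂ : 0 ≤ ε₂) (hεR : 0 ≤ εR) (hc : 1 ≤ c)
    (h1 : btil - Atil * x₀ + δr₀ = Atil * (Zbar + Zhat) * ybar)
    (h2 : xbar = x₀ + Zbar * ybar + δx)
    (h3 : ‖δr₀‖ ≤ ε₂ * ‖btil‖ + ε₁ * ‖Atil‖ * ‖x₀‖)
    (h4 : ‖Atil * Zhat‖ ≤ ε₁ * ‖Atil‖ * ‖Zbar‖)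
    (h5 : ‖δx‖ ≤ u * (c * ‖Zbar‖ * ‖ybar‖ + ‖x₀‖))
    (h6 : Zbar = MR⁻¹ * Vbar + Δ * Vbar)
    (h6a : ‖Δ‖ ≤ εR) (h6b : ‖Vbar‖ ≤ c)
    (h7 : ‖ybar‖ ≤ 1.3 * ‖Vbar * ybar‖)
    (ρ : ℝ) (hρdef : ρ = 1.3 * c * ‖MR‖ * (u * ‖Zbar‖ + εR))
    (hρ : ρ < 1) :
    ‖btil - Atil * xbar‖ / (‖btil‖ + ‖Atil‖ * ‖xbar‖) ≤
      (1.3 * (1 + c) / (1 - ρ)) *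
        ((ε₂ * ‖btil‖ + (ε₁ + u) * ‖Atil‖ *
            (‖Zbar‖ * ‖MR * (xbar - x₀)‖ + (1 + u * ‖MR‖ * ‖Zbar‖) * ‖x₀‖)) /
          (‖btil‖ + ‖Atil‖ * ‖xbar‖)) := by
  have hρ₀ : 0 ≤ ρ := by
    rw [hρdef]
    exact mul_nonneg (mul_nonneg (by linarith) (norm_nonneg _))
      (add_nonneg (mul_nonneg hu (norm_nonneg _)) hεR)
  have hres := norm_residual_le_of_perturbed_update hε₁ hc h1 h2 h3 h4 h5
  have hy := one_sub_mul_norm_le_of_eq_inv_mul_add_mul hMR (by norm_num) h2 h5 h6 h6a h6b h7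
  rw [← hρdef] at hy
  have hcomb := one_sub_mul_le_of_one_sub_mul_le hρ₀ hc hu (norm_nonneg Zbar) (norm_nonneg _)
    (norm_nonneg MR) (norm_nonneg x₀) hy
  have hnum : (1 - ρ) * ‖btil - Atil * xbar‖ ≤ 1.3 * (1 + c) * (ε₂ * ‖btil‖ + (ε₁ + u) * ‖Atil‖ *
      (‖Zbar‖ * ‖MR * (xbar - x₀)‖ + (1 + u * ‖MR‖ * ‖Zbar‖) * ‖x₀‖)) := by
    have hea : 0 ≤ (ε₁ + u) * ‖Atil‖ := mul_nonneg (add_nonneg hε₁ hu) (norm_nonneg _)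
    have hb : 0 ≤ (1.3 * (1 + c) - (1 - ρ)) * (ε₂ * ‖btil‖) :=
      mul_nonneg (by linarith) (mul_nonneg hε₂ (norm_nonneg _))
    linear_combination mul_le_mul_of_nonneg_left hres (sub_nonneg.2 hρ.le) +
      mul_le_mul_of_nonneg_left hcomb hea + hb
  rw [mul_div_assoc']
  refine div_le_div_of_nonneg_right ?_ (by positivity)
  rwa [div_mul_eq_mul_div, le_div_iff₀ (sub_pos.2 hρ), mul_comm]

/-- Deterministic form of Theorem 2.1: normwise relative backward error bound for
mixed precision split-preconditioned FGMRES on the left-preconditioned system. -/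
theorem fgmres_backward_error_bound
    (n k : ℕ) (hn : 0 < n) (hk : 0 < k)
    (Atil MR : Matrix (Fin n) (Fin n) ℝ)
    (hAtil : IsUnit Atil.det) (hMR : IsUnit MR.det)
    (btil x₀ xbar δr₀ δx : Matrix (Fin n) (Fin 1) ℝ)
    (Zbar Zhat Vbar : Matrix (Fin n) (Fin k) ℝ)
    (Δ : Matrix (Fin n) (Fin n) ℝ)
    (ybar : Matrix (Fin k) (Fin 1) ℝ)
    (u ε₁ ε₂ εR c : ℝ)
    (hu : 0 ≤ u) (hε₁ : 0 ≤ ε₁) (hε₂ : 0 ≤ ε₂) (hεR : 0 ≤ εR) (hc : 1 ≤ c)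
    (h1 : btil - Atil * x₀ + δr₀ = Atil * (Zbar + Zhat) * ybar)
    (h2 : xbar = x₀ + Zbar * ybar + δx)
    (h3 : ‖δr₀‖ ≤ ε₂ * ‖btil‖ + ε₁ * ‖Atil‖ * ‖x₀‖)
    (h4 : ‖Atil * Zhat‖ ≤ ε₁ * ‖Atil‖ * ‖Zbar‖)
    (h5 : ‖δx‖ ≤ u * (c * ‖Zbar‖ * ‖ybar‖ + ‖x₀‖))
    (h6 : Zbar = MR⁻¹ * Vbar + Δ * Vbar)
    (h6a : ‖Δ‖ ≤ εR) (h6b : ‖Vbar‖ ≤ c)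
    (h7 : ‖ybar‖ ≤ 1.3 * ‖Vbar * ybar‖)
    (ρ : ℝ) (hρdef : ρ = 1.3 * c * ‖MR‖ * (u * ‖Zbar‖ + εR))
    (hρ : ρ < 1)
    (hpos : 0 < ‖btil‖ + ‖Atil‖ * ‖xbar‖) :
    ‖btil - Atil * xbar‖ / (‖btil‖ + ‖Atil‖ * ‖xbar‖) ≤
      (1.3 * (1 + c) / (1 - ρ)) *
        ((ε₂ * ‖btil‖ + (ε₁ + u) * ‖Atil‖ *
            (‖Zbar‖ * ‖MR * (xbar - x₀)‖ + (1 + u * ‖MR‖ * ‖Zbar‖) * ‖x₀‖)) /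
          (‖btil‖ + ‖Atil‖ * ‖xbar‖)) :=
  fgmres_backward_error_bound_general n k Atil MR hMR btil x₀ xbar δr₀ δx Zbar Zhat Vbar Δ ybar u ε₁
    ε₂ εR c hu hε₁ hε₂ hεR hc h1 h2 h3 h4 h5 h6 h6a h6b h7 ρ hρdef hρ
end

section
/- Let M_R ∈ ℝ^{n×n} be invertible, let V̄, Z̄ ∈ ℝ^{n×k}, Δ ∈ ℝ^{n×n}, ȳ ∈ ℝᵏ, x₀, x̄, δx ∈ ℝⁿ, and let u, ε_R ≥ 0 and c ≥ 1 be reals. Assume: x̄ = x₀ + Z̄ȳ + δx; ‖δx‖ ≤ u(c‖Z̄‖‖ȳ‖ + ‖x₀‖); Z̄ = M_R⁻¹V̄ + ΔV̄ with ‖Δ‖ ≤ ε_R and ‖V̄‖ ≤ c; ‖ȳ‖ ≤ 1.3‖V̄ȳ‖; and ρ := 1.3·c·‖M_R‖(u‖Z̄‖ + ε_R) < 1. Then ‖ȳ‖ ≤ (1.3/(1−ρ)) · ( ‖M_R(x̄ − x₀)‖ + u‖M_R‖‖x₀‖ ). -/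
open scoped Matrix.Norms.L2Operator

/-!
Multiplying `Z̄ = M_R⁻¹V̄ + ΔV̄` by `M_R` and using `Z̄ȳ = (x̄ - x₀) - δx` expresses `V̄ȳ` as
`M_R(x̄ - x₀) - M_R δx - M_R Δ V̄ȳ`. Bounding each term, and `‖δx‖` through `‖ȳ‖`, turns
`‖ȳ‖ ≤ 1.3‖V̄ȳ‖` into `‖ȳ‖ ≤ 1.3(‖M_R(x̄ - x₀)‖ + u‖M_R‖‖x₀‖) + ρ‖ȳ‖`, which is solved for `‖ȳ‖`
since `ρ < 1`.
-/

theorem le_div_one_sub_of_le_add_mul {α : Type*} [Field α] [LinearOrder α] [IsStrictOrderedRing α]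
    {y a ρ : α} (hρ : ρ < 1) (h : y ≤ a + ρ * y) : y ≤ a / (1 - ρ) := by
  rw [le_div_iff₀ (sub_pos.mpr hρ)]
  linarith

namespace Matrix

variable {m n p : Type*} [Fintype m] [DecidableEq m] [Fintype n] {R : Type*} [CommRing R]

theorem mul_eq_of_eq_nonsing_inv_mul_add_mul {M Δ : Matrix m m R} (hM : IsUnit M.det)
    {V Z : Matrix m n R} {y : Matrix n p R} {x₀ x δx : Matrix m p R}
    (hx : x = x₀ + Z * y + δx) (hZ : Z = M⁻¹ * V + Δ * V) :
    V * y = M * (x - x₀) - M * δx - M * (Δ * (V * y)) := by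
  have hMZ : M * (Z * y) = V * y + M * (Δ * (V * y)) := by
    rw [hZ, Matrix.add_mul, Matrix.mul_add, Matrix.mul_assoc M⁻¹, ← Matrix.mul_assoc M,
      Matrix.mul_nonsing_inv M hM, Matrix.one_mul, Matrix.mul_assoc Δ]
  have hZy : Z * y = x - x₀ - δx := by rw [hx]; abel
  rw [hZy, Matrix.mul_sub] at hMZ
  exact eq_sub_of_add_eq hMZ.symm

end Matrix

theorem fgmres_stage4_ybar_bound_general
    (n k : ℕ)
    (MR : Matrix (Fin n) (Fin n) ℝ) (hMR : IsUnit MR.det)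
    (Vbar Zbar : Matrix (Fin n) (Fin k) ℝ)
    (Δ : Matrix (Fin n) (Fin n) ℝ)
    (ybar : Matrix (Fin k) (Fin 1) ℝ)
    (x₀ xbar δx : Matrix (Fin n) (Fin 1) ℝ)
    (u εR c : ℝ)
    (h2 : xbar = x₀ + Zbar * ybar + δx)
    (h5 : ‖δx‖ ≤ u * (c * ‖Zbar‖ * ‖ybar‖ + ‖x₀‖))
    (h6 : Zbar = MR⁻¹ * Vbar + Δ * Vbar)
    (h6a : ‖Δ‖ ≤ εR) (h6b : ‖Vbar‖ ≤ c)
    (h7 : ‖ybar‖ ≤ 1.3 * ‖Vbar * ybar‖)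
    (ρ : ℝ) (hρdef : ρ = 1.3 * c * ‖MR‖ * (u * ‖Zbar‖ + εR))
    (hρ : ρ < 1) :
    ‖ybar‖ ≤ (1.3 / (1 - ρ)) * (‖MR * (xbar - x₀)‖ + u * ‖MR‖ * ‖x₀‖) := by
  have hVy : ‖Vbar * ybar‖ ≤ c * ‖ybar‖ :=
    (Matrix.l2_opNorm_mul _ _).trans (by gcongr)
  have hΔVy : ‖MR * (Δ * (Vbar * ybar))‖ ≤ ‖MR‖ * (εR * (c * ‖ybar‖)) :=
    calc ‖MR * (Δ * (Vbar * ybar))‖ ≤ ‖MR‖ * (‖Δ‖ * ‖Vbar * ybar‖) := by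
          grw [Matrix.l2_opNorm_mul, Matrix.l2_opNorm_mul]
      _ ≤ ‖MR‖ * (εR * (c * ‖ybar‖)) := by gcongr; exact (norm_nonneg _).trans h6a
  have hMδx : ‖MR * δx‖ ≤ ‖MR‖ * (u * (c * ‖Zbar‖ * ‖ybar‖ + ‖x₀‖)) :=
    (Matrix.l2_opNorm_mul _ _).trans (by gcongr)
  have hVy_le : ‖Vbar * ybar‖
      ≤ ‖MR * (xbar - x₀)‖ + ‖MR * δx‖ + ‖MR * (Δ * (Vbar * ybar))‖ := by
    rw [congrArg norm (Matrix.mul_eq_of_eq_nonsing_inv_mul_add_mul hMR h2 h6)]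
    exact (norm_sub_le _ _).trans (by gcongr; exact norm_sub_le _ _)
  rw [div_mul_eq_mul_div]
  refine le_div_one_sub_of_le_add_mul hρ ?_
  rw [hρdef]
  linarith

/-- Stage 4 bound on the norm of the computed least-squares solution in the proof of
Theorem 2.1. -/
theorem fgmres_stage4_ybar_bound
    (n k : ℕ)
    (MR : Matrix (Fin n) (Fin n) ℝ) (hMR : IsUnit MR.det)
    (Vbar Zbar : Matrix (Fin n) (Fin k) ℝ)
    (Δ : Matrix (Fin n) (Fin n) ℝ)
    (ybar : Matrix (Fin k) (Fin 1) ℝ)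
    (x₀ xbar δx : Matrix (Fin n) (Fin 1) ℝ)
    (u εR c : ℝ)
    (hu : 0 ≤ u) (hεR : 0 ≤ εR) (hc : 1 ≤ c)
    (h2 : xbar = x₀ + Zbar * ybar + δx)
    (h5 : ‖δx‖ ≤ u * (c * ‖Zbar‖ * ‖ybar‖ + ‖x₀‖))
    (h6 : Zbar = MR⁻¹ * Vbar + Δ * Vbar)
    (h6a : ‖Δ‖ ≤ εR) (h6b : ‖Vbar‖ ≤ c)
    (h7 : ‖ybar‖ ≤ 1.3 * ‖Vbar * ybar‖)
    (ρ : ℝ) (hρdef : ρ = 1.3 * c * ‖MR‖ * (u * ‖Zbar‖ + εR))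
    (hρ : ρ < 1) :
    ‖ybar‖ ≤ (1.3 / (1 - ρ)) * (‖MR * (xbar - x₀)‖ + u * ‖MR‖ * ‖x₀‖) :=
  fgmres_stage4_ybar_bound_general n k MR hMR Vbar Zbar Δ ybar x₀ xbar δx u εR c h2 h5 h6 h6a h6b h7
    ρ hρdef hρ
end

section
/- Let A, M ∈ ℝ^{n×n} with M invertible, and let b, x̄ ∈ ℝⁿ. If ‖b‖ + ‖A‖‖x̄‖ > 0 and ‖M⁻¹b‖ + ‖M⁻¹A‖‖x̄‖ > 0, then ‖b − Ax̄‖ / (‖b‖ + ‖A‖‖x̄‖) ≤ κ(M) · ‖M⁻¹b − M⁻¹Ax̄‖ / (‖M⁻¹b‖ + ‖M⁻¹A‖‖x̄‖), where κ(M) = ‖M‖‖M⁻¹‖. -/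
open scoped Matrix.Norms.L2Operator

/-!
The residual of the original system is `M` applied to the residual of the preconditioned one,
so it grows by at most `‖M‖`; the normalising denominator of the preconditioned system is at
most `‖M⁻¹‖` times that of the original one. Together they give the factor `κ(M) = ‖M‖‖M⁻¹‖`.
-/

namespace Matrix

variable {𝕜 l m n p : Type*} [RCLike 𝕜] [Fintype l] [Fintype m] [Fintype n] [Fintype p]
  [DecidableEq m] [DecidableEq p]

theorem l2_opNorm_sub_mul_le_mul_l2_opNorm_nonsing_inv_mul
    (A : Matrix m n 𝕜) (M : Matrix m m 𝕜) (hM : IsUnit M.det) (b : Matrix m p 𝕜)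
    (x : Matrix n p 𝕜) :
    ‖b - A * x‖ ≤ ‖M‖ * ‖M⁻¹ * b - M⁻¹ * A * x‖ := by
  have hresidual : b - A * x = M * (M⁻¹ * b - M⁻¹ * A * x) := by
    simp [Matrix.mul_sub, ← Matrix.mul_assoc, mul_nonsing_inv _ hM]
  rw [hresidual]
  exact l2_opNorm_mul M _

theorem l2_opNorm_mul_add_l2_opNorm_mul_mul_le [DecidableEq n]
    (N : Matrix l m 𝕜) (A : Matrix m n 𝕜) (b : Matrix m p 𝕜) (x : Matrix n p 𝕜) :
    ‖N * b‖ + ‖N * A‖ * ‖x‖ ≤ ‖N‖ * (‖b‖ + ‖A‖ * ‖x‖) := by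
  have hb : ‖N * b‖ ≤ ‖N‖ * ‖b‖ := l2_opNorm_mul N b
  have hA : ‖N * A‖ * ‖x‖ ≤ ‖N‖ * ‖A‖ * ‖x‖ :=
    mul_le_mul_of_nonneg_right (l2_opNorm_mul N A) (norm_nonneg x)
  linarith

end Matrix

theorem div_le_mul_mul_div_of_le_mul {r t S s a c : ℝ} (hS : 0 < S) (hs : 0 < s)
    (ha : 0 ≤ a) (ht : 0 ≤ t) (hr : r ≤ a * t) (hsS : s ≤ c * S) :
    r / S ≤ a * c * (t / s) := by
  calc r / S ≤ a * t / S := by gcongr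
    _ ≤ a * t * (c / s) := by
        rw [div_eq_mul_inv]
        gcongr
        rw [le_div_iff₀ hs, inv_mul_le_iff₀ hS]
        linarith
    _ = a * c * (t / s) := by ring

/-- The κ(M_L) branch of Corollary 2.2: the normwise relative backward error for the
original system is bounded by κ(M) times the backward error for the
left-preconditioned system. -/
theorem backward_error_original_le_condM_mul_backward_error_preconditioned
    (n : ℕ)
    (A M : Matrix (Fin n) (Fin n) ℝ) (hM : IsUnit M.det)
    (b xbar : Matrix (Fin n) (Fin 1) ℝ)
    (hpos : 0 < ‖b‖ + ‖A‖ * ‖xbar‖)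
    (hpos' : 0 < ‖M⁻¹ * b‖ + ‖M⁻¹ * A‖ * ‖xbar‖) :
    ‖b - A * xbar‖ / (‖b‖ + ‖A‖ * ‖xbar‖) ≤
      (‖M‖ * ‖M⁻¹‖) *
        (‖M⁻¹ * b - M⁻¹ * A * xbar‖ / (‖M⁻¹ * b‖ + ‖M⁻¹ * A‖ * ‖xbar‖)) :=
  div_le_mul_mul_div_of_le_mul hpos hpos' (norm_nonneg M) (norm_nonneg _)
    (Matrix.l2_opNorm_sub_mul_le_mul_l2_opNorm_nonsing_inv_mul A M hM b xbar)
    (Matrix.l2_opNorm_mul_add_l2_opNorm_mul_mul_le M⁻¹ A b xbar)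
end

section
/- Let M_L, Ã ∈ ℝ^{n×n} with M_L and Ã invertible, set A := M_L Ã, and let x, x̄, b̃ ∈ ℝⁿ with Ãx = b̃, x ≠ 0, and set b := M_L b̃. If t := κ(Ã)·‖b̃ − Ãx̄‖ / (‖Ã‖‖x‖) satisfies t < 1, then the normwise relative backward error of x̄ for the original system satisfies ‖b − Ax̄‖ / (‖b‖ + ‖A‖‖x̄‖) ≤ t / (1 − t), where κ(Ã) = ‖Ã‖‖Ã⁻¹‖. -/
open scoped Matrix.Norms.L2Operator

/-!
Since `x - x̄ = Ã⁻¹ (b̃ - Ã x̄)`, the relative forward error `‖x - x̄‖ / ‖x‖` is at most `t`.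
A relative forward error `t < 1` gives `‖x̄‖ ≥ (1 - t) ‖x‖`, while the residual
`b - A x̄ = A (x - x̄)` has norm at most `t ‖A‖ ‖x‖`; dividing yields `t / (1 - t)`.
-/

namespace Matrix

variable {𝕜 : Type*} [RCLike 𝕜] {m n p : Type*} [Fintype m] [Fintype n] [Fintype p]
  [DecidableEq n] [DecidableEq p]

theorem l2_opNorm_sub_le_of_mul_eq {A : Matrix n n 𝕜} (hA : IsUnit A.det)
    {x x' b : Matrix n p 𝕜} (hxb : A * x = b) :
    ‖x - x'‖ ≤ ‖A⁻¹‖ * ‖b - A * x'‖ := by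
  have hsub : x - x' = A⁻¹ * (b - A * x') := by
    rw [Matrix.mul_sub, ← hxb, nonsing_inv_mul_cancel_left _ _ hA,
      nonsing_inv_mul_cancel_left _ _ hA]
  exact hsub ▸ l2_opNorm_mul _ _

theorem backward_error_le_of_forward_error_le (A : Matrix m n 𝕜) {x x' : Matrix n p 𝕜}
    {τ : ℝ} (hτ₀ : 0 ≤ τ) (hτ₁ : τ < 1) (hfe : ‖x - x'‖ ≤ τ * ‖x‖) :
    ‖A * x - A * x'‖ / (‖A * x‖ + ‖A‖ * ‖x'‖) ≤ τ / (1 - τ) := by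
  have hx' : (1 - τ) * ‖x‖ ≤ ‖x'‖ := by
    linarith [norm_sub_norm_le x x']
  have hres : ‖A * x - A * x'‖ ≤ ‖A‖ * (τ * ‖x‖) := by
    rw [← Matrix.mul_sub]
    exact (l2_opNorm_mul _ _).trans (by gcongr)
  have hq : 0 ≤ τ / (1 - τ) := div_nonneg hτ₀ (by linarith)
  refine div_le_of_le_mul₀ (by positivity) hq ?_
  calc ‖A * x - A * x'‖ ≤ ‖A‖ * (τ * ‖x‖) := hres
    _ = τ / (1 - τ) * (‖A‖ * ((1 - τ) * ‖x‖)) := by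
      field_simp [(by linarith : (1 - τ) ≠ 0)]
    _ ≤ τ / (1 - τ) * (‖A * x‖ + ‖A‖ * ‖x'‖) := by
      gcongr
      linarith [norm_nonneg (A * x), mul_le_mul_of_nonneg_left hx' (norm_nonneg A)]

end Matrix

theorem backward_error_original_le_of_cond_scaled_residual_general
    (n : ℕ)
    (ML Atil : Matrix (Fin n) (Fin n) ℝ)
    (hAtil : IsUnit Atil.det)
    (A : Matrix (Fin n) (Fin n) ℝ) (hA : A = ML * Atil)
    (x xbar btil : Matrix (Fin n) (Fin 1) ℝ)
    (hxb : Atil * x = btil) (hx : x ≠ 0)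
    (b : Matrix (Fin n) (Fin 1) ℝ) (hb : b = ML * btil)
    (t : ℝ) (ht : t = (‖Atil‖ * ‖Atil⁻¹‖) * (‖btil - Atil * xbar‖ / (‖Atil‖ * ‖x‖)))
    (ht1 : t < 1) :
    ‖b - A * xbar‖ / (‖b‖ + ‖A‖ * ‖xbar‖) ≤ t / (1 - t) := by
  have hxpos : 0 < ‖x‖ := norm_pos_iff.mpr hx
  have hAtilpos : 0 < ‖Atil‖ := norm_pos_iff.mpr fun h0 ↦ hx <| by
    rw [← Matrix.nonsing_inv_mul_cancel_left Atil x hAtil, h0, Matrix.zero_mul, Matrix.mul_zero]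
  have hfe : ‖x - xbar‖ ≤ t * ‖x‖ := by
    calc ‖x - xbar‖ ≤ ‖Atil⁻¹‖ * ‖btil - Atil * xbar‖ :=
          Matrix.l2_opNorm_sub_le_of_mul_eq hAtil hxb
      _ = t * ‖x‖ := by rw [ht]; field_simp
  have hbx : b = A * x := by rw [hb, hA, ← hxb, Matrix.mul_assoc]
  subst hbx
  exact A.backward_error_le_of_forward_error_le (ht ▸ by positivity) ht1 hfe

/-- The κ(Ã) branch of Corollary 2.2: a small condition-number–times–scaled-residual
quantity for the left-preconditioned system bounds the backward error of the original
system. -/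
theorem backward_error_original_le_of_cond_scaled_residual
    (n : ℕ)
    (ML Atil : Matrix (Fin n) (Fin n) ℝ)
    (hML : IsUnit ML.det) (hAtil : IsUnit Atil.det)
    (A : Matrix (Fin n) (Fin n) ℝ) (hA : A = ML * Atil)
    (x xbar btil : Matrix (Fin n) (Fin 1) ℝ)
    (hxb : Atil * x = btil) (hx : x ≠ 0)
    (b : Matrix (Fin n) (Fin 1) ℝ) (hb : b = ML * btil)
    (t : ℝ) (ht : t = (‖Atil‖ * ‖Atil⁻¹‖) * (‖btil - Atil * xbar‖ / (‖Atil‖ * ‖x‖)))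
    (ht1 : t < 1) :
    ‖b - A * xbar‖ / (‖b‖ + ‖A‖ * ‖xbar‖) ≤ t / (1 - t) :=
  backward_error_original_le_of_cond_scaled_residual_general n ML Atil hAtil A hA x xbar btil hxb hx
    b hb t ht ht1
end

section
/- Let L, ΔL ∈ ℝ^{n×n} with L invertible and |ΔL| ≤ ε|L| entrywise for some ε ≥ 0, let A ∈ ℝ^{n×n}, and let z ∈ ℝⁿ. Then ‖L⁻¹ ΔL L⁻¹ A z‖ ≤ ε · ‖ |L⁻¹| |L| ‖ · ‖L⁻¹A‖ · ‖z‖, and in particular ‖L⁻¹ ΔL L⁻¹ A z‖ ≤ ε √n · κ(L) · ‖L⁻¹A‖ · ‖z‖ with κ(L) = ‖L‖‖L⁻¹‖. -/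
/-!
Split `L⁻¹ ΔL L⁻¹ A z = (L⁻¹ ΔL)(L⁻¹ A)z`. Entrywise `|L⁻¹ ΔL| ≤ ε |L⁻¹| |L|`, and the spectral
norm is monotone under entrywise domination by a nonnegative matrix (apply it to `|x|`), which
gives the first bound. For the second, `‖ΔL‖` is at most its Frobenius norm, hence at most
`ε` times the Frobenius norm of `L`, which is at most `√n ‖L‖` since each column of `L` has
norm at most `‖L‖`.
-/

open scoped Matrix.Norms.L2Operator

theorem EuclideanSpace.norm_le_norm_of_forall_norm_le {ι : Type*} [Fintype ι]
    {x y : EuclideanSpace ℝ ι} (h : ∀ i, ‖x i‖ ≤ ‖y i‖) : ‖x‖ ≤ ‖y‖ := by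
  rw [EuclideanSpace.norm_eq, EuclideanSpace.norm_eq]
  gcongr with i
  exact h i

namespace Matrix

theorem abs_mulVec_apply_le {m k : Type*} [Fintype k] {B C : Matrix m k ℝ}
    (h : ∀ i j, |B i j| ≤ C i j) (x : k → ℝ) (i : m) :
    |(B *ᵥ x) i| ≤ (C *ᵥ fun j => |x j|) i := by
  refine (Finset.abs_sum_le_sum_abs _ _).trans (Finset.sum_le_sum fun j _ => ?_)
  rw [abs_mul]
  exact mul_le_mul_of_nonneg_right (h i j) (abs_nonneg _)

theorem abs_mul_apply_le_of_abs_le_mul_abs {m k l : Type*} [Fintype k] (M : Matrix m k ℝ)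
    {N P : Matrix k l ℝ} {ε : ℝ} (h : ∀ i j, |N i j| ≤ ε * |P i j|) (i : m) (j : l) :
    |(M * N) i j| ≤ (ε • (of (fun i j => |M i j|) * of (fun i j => |P i j|))) i j := by
  simp only [smul_apply, mul_apply, of_apply, smul_eq_mul, Finset.mul_sum]
  refine (Finset.abs_sum_le_sum_abs _ _).trans (Finset.sum_le_sum fun k _ => ?_)
  rw [abs_mul, mul_left_comm]
  exact mul_le_mul_of_nonneg_left (h k j) (abs_nonneg _)

variable {m k : Type*} [Fintype m] [Fintype k] [DecidableEq k]

theorem l2_opNorm_le_bound (A : Matrix m k ℝ) {c : ℝ} (hc : 0 ≤ c)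
    (h : ∀ x : EuclideanSpace ℝ k, ‖(EuclideanSpace.equiv m ℝ).symm (A *ᵥ x)‖ ≤ c * ‖x‖) :
    ‖A‖ ≤ c :=
  ContinuousLinearMap.opNorm_le_bound _ hc h

theorem l2_opNorm_le_of_abs_le {B C : Matrix m k ℝ} (h : ∀ i j, |B i j| ≤ C i j) :
    ‖B‖ ≤ ‖C‖ := by
  refine l2_opNorm_le_bound B (norm_nonneg C) fun x => ?_
  let xAbs : EuclideanSpace ℝ k := WithLp.toLp 2 fun j => |x j|
  have hxAbs : ‖xAbs‖ = ‖x‖ :=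
    le_antisymm (EuclideanSpace.norm_le_norm_of_forall_norm_le fun j => by simp [xAbs])
      (EuclideanSpace.norm_le_norm_of_forall_norm_le fun j => by simp [xAbs])
  calc ‖(EuclideanSpace.equiv m ℝ).symm (B *ᵥ x)‖
      ≤ ‖(EuclideanSpace.equiv m ℝ).symm (C *ᵥ xAbs)‖ :=
        EuclideanSpace.norm_le_norm_of_forall_norm_le fun i =>
          (abs_mulVec_apply_le h x i).trans (le_abs_self _)
    _ ≤ ‖C‖ * ‖x‖ := hxAbs ▸ l2_opNorm_mulVec C xAbs

theorem l2_opNorm_le_sqrt_sum_sq (A : Matrix m k ℝ) :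
    ‖A‖ ≤ √(∑ i, ∑ j, A i j ^ 2) := by
  refine l2_opNorm_le_bound A (Real.sqrt_nonneg _) fun x => ?_
  rw [EuclideanSpace.norm_eq, EuclideanSpace.norm_eq, ← Real.sqrt_mul (by positivity),
    Finset.sum_mul]
  gcongr with i
  simpa [mulVec, dotProduct] using
    Finset.sum_mul_sq_le_sq_mul_sq Finset.univ (fun j => A i j) (fun j => x j)

theorem sum_sq_apply_le_card_mul_l2_opNorm_sq (A : Matrix m k ℝ) :
    ∑ i, ∑ j, A i j ^ 2 ≤ Fintype.card k * ‖A‖ ^ 2 := by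
  have hcol : ∀ j, ∑ i, A i j ^ 2 ≤ ‖A‖ ^ 2 := fun j => by
    have hcol_eq : A *ᵥ (EuclideanSpace.single j (1 : ℝ) : k → ℝ) = fun i => A i j := by
      ext i; simp [EuclideanSpace.single, mulVec_single]
    have hnorm := l2_opNorm_mulVec A (EuclideanSpace.single j 1)
    rw [PiLp.norm_single, norm_one, mul_one, hcol_eq] at hnorm
    have hsq := pow_le_pow_left₀ (norm_nonneg _) hnorm 2
    rwa [EuclideanSpace.real_norm_sq_eq] at hsq
  rw [Finset.sum_comm]
  simpa using Finset.sum_le_sum fun j (_ : j ∈ Finset.univ) => hcol j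

theorem l2_opNorm_le_of_abs_le_mul_abs {B C : Matrix m k ℝ} {ε : ℝ} (hε : 0 ≤ ε)
    (h : ∀ i j, |B i j| ≤ ε * |C i j|) : ‖B‖ ≤ ε * √(Fintype.card k) * ‖C‖ :=
  calc ‖B‖ ≤ √(∑ i, ∑ j, B i j ^ 2) := l2_opNorm_le_sqrt_sum_sq B
    _ ≤ √(ε ^ 2 * ∑ i, ∑ j, C i j ^ 2) := by
        simp only [Finset.mul_sum, ← sq_abs (B _ _), ← sq_abs (C _ _), ← mul_pow]
        gcongr with i _ j _
        exact h i j
    _ ≤ √(ε ^ 2 * (Fintype.card k * ‖C‖ ^ 2)) := by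
        gcongr
        exact sum_sq_apply_le_card_mul_l2_opNorm_sq C
    _ = ε * √(Fintype.card k) * ‖C‖ := by
        rw [Real.sqrt_mul (by positivity), Real.sqrt_mul (by positivity),
          Real.sqrt_sq hε, Real.sqrt_sq (norm_nonneg C), mul_assoc]

theorem l2_opNorm_mul_le_of_abs_le_mul_abs {l : Type*} [Fintype l]
    (M : Matrix m l ℝ) {N P : Matrix l k ℝ} {ε : ℝ} (hε : 0 ≤ ε)
    (h : ∀ i j, |N i j| ≤ ε * |P i j|) :
    ‖M * N‖ ≤ ε * ‖of (fun i j => |M i j|) * of (fun i j => |P i j|)‖ := by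
  rw [← abs_of_nonneg hε, ← Real.norm_eq_abs, ← norm_smul]
  exact l2_opNorm_le_of_abs_le (abs_mul_apply_le_of_abs_le_mul_abs M h)

end Matrix

open Matrix

theorem psiL_bound_LU_split_general
    (n : ℕ)
    (L ΔL : Matrix (Fin n) (Fin n) ℝ)
    (ε : ℝ) (hε : 0 ≤ ε)
    (habs : ∀ i j, |ΔL i j| ≤ ε * |L i j|)
    (A : Matrix (Fin n) (Fin n) ℝ)
    (z : Matrix (Fin n) (Fin 1) ℝ) :
    ‖L⁻¹ * ΔL * L⁻¹ * A * z‖ ≤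
        ε * ‖(Matrix.of fun i j => |L⁻¹ i j|) * (Matrix.of fun i j => |L i j|)‖ *
          ‖L⁻¹ * A‖ * ‖z‖ ∧
      ‖L⁻¹ * ΔL * L⁻¹ * A * z‖ ≤
        ε * Real.sqrt n * (‖L‖ * ‖L⁻¹‖) * ‖L⁻¹ * A‖ * ‖z‖ := by
  have hsplit : ‖L⁻¹ * ΔL * L⁻¹ * A * z‖ ≤ ‖L⁻¹ * ΔL‖ * (‖L⁻¹ * A‖ * ‖z‖) := by
    have hassoc : L⁻¹ * ΔL * L⁻¹ * A * z = L⁻¹ * ΔL * (L⁻¹ * A * z) := by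
      simp only [Matrix.mul_assoc]
    rw [hassoc]
    exact (l2_opNorm_mul _ _).trans (by gcongr; exact l2_opNorm_mul _ _)
  have hΔL : ‖ΔL‖ ≤ ε * √n * ‖L‖ := by
    simpa using l2_opNorm_le_of_abs_le_mul_abs hε habs
  refine ⟨?_, ?_⟩
  · calc _ ≤ ‖L⁻¹ * ΔL‖ * (‖L⁻¹ * A‖ * ‖z‖) := hsplit
      _ ≤ ε * ‖of (fun i j => |L⁻¹ i j|) * of (fun i j => |L i j|)‖ * (‖L⁻¹ * A‖ * ‖z‖) := by
          gcongr
          exact l2_opNorm_mul_le_of_abs_le_mul_abs L⁻¹ hε habs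
      _ = _ := by ring
  · calc _ ≤ ‖L⁻¹ * ΔL‖ * (‖L⁻¹ * A‖ * ‖z‖) := hsplit
      _ ≤ ‖L⁻¹‖ * (ε * √n * ‖L‖) * (‖L⁻¹ * A‖ * ‖z‖) := by
          gcongr
          exact (l2_opNorm_mul _ _).trans (by gcongr)
      _ = _ := by ring

/-- Bound (3.4) underlying the estimate ψ_L ≤ c̃(n)κ(L̄) for the LU split preconditioner. -/
theorem psiL_bound_LU_split
    (n : ℕ)
    (L ΔL : Matrix (Fin n) (Fin n) ℝ) (hL : IsUnit L.det)
    (ε : ℝ) (hε : 0 ≤ ε)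
    (habs : ∀ i j, |ΔL i j| ≤ ε * |L i j|)
    (A : Matrix (Fin n) (Fin n) ℝ)
    (z : Matrix (Fin n) (Fin 1) ℝ) :
    ‖L⁻¹ * ΔL * L⁻¹ * A * z‖ ≤
        ε * ‖(Matrix.of fun i j => |L⁻¹ i j|) * (Matrix.of fun i j => |L i j|)‖ *
          ‖L⁻¹ * A‖ * ‖z‖ ∧
      ‖L⁻¹ * ΔL * L⁻¹ * A * z‖ ≤
        ε * Real.sqrt n * (‖L‖ * ‖L⁻¹‖) * ‖L⁻¹ * A‖ * ‖z‖ :=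
  psiL_bound_LU_split_general n L ΔL ε hε habs A z
end
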